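/- In the ETH-reduction graph G', if φ: V(H) → V(G) is a subgraph isomorphism, then the packing C consisting of the I-cycles ⟨u₁,u₂,φ(u)₃⟩ for all u ∈ V(H) together with disjoint F-cycles ⟨x₃,i₄,i₅⟩ matching the n_G − n_H uncovered vertices of W₃ bijectively to [n_G − n_H] is a packing of pairwise vertex-disjoint directed 3-cycles covering exactly the 3·n_G vertices V(G') \ {z}, and C is rejection-proof. -/

import Mathlib

open Finset

/-- The vertex set of the ETH-reduction graph G': two copies of V(H), one copy of
V(G), two copies of [n_G - n_H], and an extra vertex z. -/
inductive Vtx (nH nG : ℕ) where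
  | w1 : Fin nH → Vtx nH nG
  | w2 : Fin nH → Vtx nH nG
  | w3 : Fin nG → Vtx nH nG
  | w4 : Fin (nG - nH) → Vtx nH nG
  | w5 : Fin (nG - nH) → Vtx nH nG
  | z  : Vtx nH nG
deriving DecidableEq

/-- The directed edge relation of the ETH-reduction graph G' built from G and H
(using the linear order on Fin nG as the fixed ordering on V(G)). -/
def Edg {nH nG : ℕ} (G : SimpleGraph (Fin nG)) (H : SimpleGraph (Fin nH)) :
    Vtx nH nG → Vtx nH nG → Prop
  | .w1 u, .w1 v => H.Adj u v
  | .w1 u, .w2 v => u = v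
  | .w2 _, .w3 _ => True
  | .w3 _, .w1 _ => True
  | .w4 i, .w5 j => i = j
  | .w3 _, .w4 _ => True
  | .w5 _, .w3 _ => True
  | .w3 _, .z => True
  | .z, .w3 _ => True
  | .w3 x, .w3 y => ¬ G.Adj x y ∧ x < y
  | _, _ => False

/-- Agent 1 owns W₁ ∪ W₃ ∪ W₅ ∪ {z}. -/
def own1 {nH nG : ℕ} : Vtx nH nG → Bool
  | .w2 _ => false
  | .w4 _ => false
  | _ => true

/-- Agent 2 owns W₂ ∪ W₄. -/
def own2 {nH nG : ℕ} (v : Vtx nH nG) : Bool := ! own1 v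

/-- `C` is (the vertex set of) a directed cycle of length 2 or 3 in the digraph `E`. -/
def IsCyc {V : Type*} [DecidableEq V] (E : V → V → Prop) (C : Finset V) : Prop :=
  (∃ a b, a ≠ b ∧ C = {a, b} ∧ E a b ∧ E b a) ∨
  (∃ a b c, a ≠ b ∧ a ≠ c ∧ b ≠ c ∧ C = {a, b, c} ∧ E a b ∧ E b c ∧ E c a)

/-- A collection of finsets is pairwise disjoint. -/
def PairwiseDisj {V : Type*} [DecidableEq V] (X : Finset (Finset V)) : Prop :=
  (X : Set (Finset V)).PairwiseDisjoint id

/-- The number of vertices of the given agent covered by the packing `C`. -/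
def covB {V : Type*} [DecidableEq V] (own : V → Bool) (C : Finset (Finset V)) : ℕ :=
  ((C.biUnion id).filter (fun v => own v)).card

/-- The agent owning the vertices with `own v = true` c-rejects the packing `C`:
it can remove at most `c` cycles and add internal cycles so that the result is
pairwise vertex-disjoint and covers strictly more of its own vertices. -/
def CRejects {V : Type*} [DecidableEq V] (E : V → V → Prop) (own : V → Bool)
    (c : ℕ) (C : Finset (Finset V)) : Prop :=
  ∃ Crej ⊆ C, Crej.card ≤ c ∧ ∃ Cint : Finset (Finset V),
    (∀ D ∈ Cint, IsCyc E D ∧ ∀ v ∈ D, own v = true) ∧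
    PairwiseDisj ((C \ Crej) ∪ Cint) ∧
    covB own C < covB own ((C \ Crej) ∪ Cint)

/-- The agent owning the vertices with `own v = true` rejects the packing `C`
(no bound on the number of removed cycles). -/
def RejAny {V : Type*} [DecidableEq V] (E : V → V → Prop) (own : V → Bool)
    (C : Finset (Finset V)) : Prop :=
  ∃ Crej ⊆ C, ∃ Cint : Finset (Finset V),
    (∀ D ∈ Cint, IsCyc E D ∧ ∀ v ∈ D, own v = true) ∧
    PairwiseDisj ((C \ Crej) ∪ Cint) ∧
    covB own C < covB own ((C \ Crej) ∪ Cint)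

/-! ### Auxiliary material -/

deriving instance Fintype for Vtx

/-- The I-cycle of `u`. -/
def Icyc {nH nG : ℕ} (φ : Fin nH → Fin nG) (u : Fin nH) : Finset (Vtx nH nG) :=
  {Vtx.w1 u, Vtx.w2 u, Vtx.w3 (φ u)}

/-- The F-cycle of `i`. -/
def Fcyc {nH nG : ℕ} (ψ : Fin (nG - nH) → Fin nG) (i : Fin (nG - nH)) :
    Finset (Vtx nH nG) :=
  {Vtx.w3 (ψ i), Vtx.w4 i, Vtx.w5 i}

section Aux

variable {nH nG : ℕ} {G : SimpleGraph (Fin nG)} {H : SimpleGraph (Fin nH)}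

lemma edg_from_z {v : Vtx nH nG} (h : Edg G H .z v) : ∃ x, v = .w3 x := by
  cases v <;> simp_all [Edg]

lemma edg_to_z {v : Vtx nH nG} (h : Edg G H v .z) : ∃ x, v = .w3 x := by
  cases v <;> simp_all [Edg]

lemma edg_to_w5 {v : Vtx nH nG} {i} (h : Edg G H v (.w5 i)) : v = .w4 i := by
  cases v <;> simp_all [Edg]

lemma edg_w1_own {u : Fin nH} {b : Vtx nH nG} (h : Edg G H (.w1 u) b)
    (hb : own1 b = true) : ∃ v, b = .w1 v := by
  cases b with
  | w1 w => exact ⟨w, rfl⟩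
  | _ => simp_all [Edg, own1]

lemma step2 {x : Fin nG} {b : Vtx nH nG} (h1 : Edg G H (.w3 x) b)
    (h2 : Edg G H b (.w3 x)) (hb : own1 b = true) : b = .z := by
  cases b
  case w3 y =>
    exact absurd ((show ¬ G.Adj x y ∧ x < y from h1).2.trans
      (show ¬ G.Adj y x ∧ y < x from h2).2) (lt_irrefl x)
  all_goals simp_all [Edg, own1]

lemma step3 {x : Fin nG} {b c : Vtx nH nG} (h1 : Edg G H (.w3 x) b)
    (h2 : Edg G H b c) (h3 : Edg G H c (.w3 x))
    (ob : own1 b = true) (oc : own1 c = true) : b = .z ∨ c = .z := by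
  cases b <;> cases c
  case w3.w3 y w =>
    have p1 : x < y := (show ¬ G.Adj x y ∧ x < y from h1).2
    have p2 : y < w := (show ¬ G.Adj y w ∧ y < w from h2).2
    have p3 : w < x := (show ¬ G.Adj w x ∧ w < x from h3).2
    exact absurd (p1.trans (p2.trans p3)) (lt_irrefl x)
  all_goals simp_all [Edg, own1]

lemma int_w3 {D : Finset (Vtx nH nG)} {x : Fin nG} (hD : IsCyc (Edg G H) D)
    (hown : ∀ v ∈ D, own1 v = true) (hx : Vtx.w3 x ∈ D) : Vtx.z ∈ D := by
  rcases hD with ⟨a, b, hab, rfl, e1, e2⟩ | ⟨a, b, c, hab, hac, hbc, rfl, e1, e2, e3⟩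
  · simp only [mem_insert, mem_singleton] at hx ⊢
    rcases hx with hx | hx
    · subst hx; exact Or.inr (step2 e1 e2 (hown b (by simp))).symm
    · subst hx; exact Or.inl (step2 e2 e1 (hown a (by simp))).symm
  · simp only [mem_insert, mem_singleton] at hx ⊢
    rcases hx with hx | hx | hx
    · subst hx
      rcases step3 e1 e2 e3 (hown b (by simp)) (hown c (by simp)) with h | h
      · exact Or.inr (Or.inl h.symm)
      · exact Or.inr (Or.inr h.symm)
    · subst hx
      rcases step3 e2 e3 e1 (hown c (by simp)) (hown a (by simp)) with h | h
      · exact Or.inr (Or.inr h.symm)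
      · exact Or.inl h.symm
    · subst hx
      rcases step3 e3 e1 e2 (hown a (by simp)) (hown b (by simp)) with h | h
      · exact Or.inl h.symm
      · exact Or.inr (Or.inl h.symm)

lemma int_w1 {D : Finset (Vtx nH nG)} {u : Fin nH} (hD : IsCyc (Edg G H) D)
    (hown : ∀ v ∈ D, own1 v = true) (hu : Vtx.w1 u ∈ D) :
    ∀ w ∈ D, ∃ v, w = Vtx.w1 v := by
  rcases hD with ⟨a, b, hab, rfl, e1, e2⟩ | ⟨a, b, c, hab, hac, hbc, rfl, e1, e2, e3⟩
  · simp only [mem_insert, mem_singleton] at hu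
    rcases hu with hu | hu
    · subst hu
      obtain ⟨v, rfl⟩ := edg_w1_own e1 (hown b (by simp))
      intro w hw
      simp only [mem_insert, mem_singleton] at hw
      rcases hw with rfl | rfl
      exacts [⟨u, rfl⟩, ⟨v, rfl⟩]
    · subst hu
      obtain ⟨v, rfl⟩ := edg_w1_own e2 (hown a (by simp))
      intro w hw
      simp only [mem_insert, mem_singleton] at hw
      rcases hw with rfl | rfl
      exacts [⟨v, rfl⟩, ⟨u, rfl⟩]
  · simp only [mem_insert, mem_singleton] at hu
    rcases hu with hu | hu | hu
    · subst hu
      obtain ⟨v, rfl⟩ := edg_w1_own e1 (hown b (by simp))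
      obtain ⟨v', rfl⟩ := edg_w1_own e2 (hown c (by simp))
      intro w hw
      simp only [mem_insert, mem_singleton] at hw
      rcases hw with rfl | rfl | rfl
      exacts [⟨u, rfl⟩, ⟨v, rfl⟩, ⟨v', rfl⟩]
    · subst hu
      obtain ⟨v, rfl⟩ := edg_w1_own e2 (hown c (by simp))
      obtain ⟨v', rfl⟩ := edg_w1_own e3 (hown a (by simp))
      intro w hw
      simp only [mem_insert, mem_singleton] at hw
      rcases hw with rfl | rfl | rfl
      exacts [⟨v', rfl⟩, ⟨u, rfl⟩, ⟨v, rfl⟩]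
    · subst hu
      obtain ⟨v, rfl⟩ := edg_w1_own e3 (hown a (by simp))
      obtain ⟨v', rfl⟩ := edg_w1_own e1 (hown b (by simp))
      intro w hw
      simp only [mem_insert, mem_singleton] at hw
      rcases hw with rfl | rfl | rfl
      exacts [⟨v, rfl⟩, ⟨v', rfl⟩, ⟨u, rfl⟩]

lemma lw5 {D : Finset (Vtx nH nG)} {i} (hD : IsCyc (Edg G H) D)
    (h : Vtx.w5 i ∈ D) : Vtx.w4 i ∈ D := by
  rcases hD with ⟨a, b, hab, rfl, e1, e2⟩ | ⟨a, b, c, hab, hac, hbc, rfl, e1, e2, e3⟩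
  · simp only [mem_insert, mem_singleton] at h ⊢
    rcases h with h | h
    · rw [← h] at e2; exact Or.inr (edg_to_w5 e2).symm
    · rw [← h] at e1; exact Or.inl (edg_to_w5 e1).symm
  · simp only [mem_insert, mem_singleton] at h ⊢
    rcases h with h | h | h
    · rw [← h] at e3; exact Or.inr (Or.inr (edg_to_w5 e3).symm)
    · rw [← h] at e1; exact Or.inl (edg_to_w5 e1).symm
    · rw [← h] at e2; exact Or.inr (Or.inl (edg_to_w5 e2).symm)

lemma zcyc {D : Finset (Vtx nH nG)} (hD : IsCyc (Edg G H) D) (hz : Vtx.z ∈ D) :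
    (∃ x, D = {Vtx.z, Vtx.w3 x}) ∨
    (∃ x y, ¬ G.Adj x y ∧ D = {Vtx.z, Vtx.w3 x, Vtx.w3 y}) := by
  rcases hD with ⟨a, b, hab, rfl, e1, e2⟩ | ⟨a, b, c, hab, hac, hbc, rfl, e1, e2, e3⟩
  · simp only [mem_insert, mem_singleton] at hz
    rcases hz with hz | hz
    · subst hz
      obtain ⟨x, rfl⟩ := edg_from_z e1
      exact Or.inl ⟨x, rfl⟩
    · subst hz
      obtain ⟨x, rfl⟩ := edg_from_z e2
      exact Or.inl ⟨x, Finset.pair_comm _ _⟩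
  · simp only [mem_insert, mem_singleton] at hz
    rcases hz with hz | hz | hz
    · subst hz
      obtain ⟨x, rfl⟩ := edg_from_z e1
      obtain ⟨y, rfl⟩ := edg_to_z e3
      exact Or.inr ⟨x, y, (show ¬ G.Adj x y ∧ x < y from e2).1, rfl⟩
    · subst hz
      obtain ⟨x, rfl⟩ := edg_from_z e2
      obtain ⟨y, rfl⟩ := edg_to_z e1
      refine Or.inr ⟨x, y, (show ¬ G.Adj x y ∧ x < y from e3).1, ?_⟩
      ext w; simp only [mem_insert, mem_singleton]; tauto
    · subst hz
      obtain ⟨x, rfl⟩ := edg_from_z e3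
      obtain ⟨y, rfl⟩ := edg_to_z e2
      refine Or.inr ⟨x, y, (show ¬ G.Adj x y ∧ x < y from e1).1, ?_⟩
      ext w; simp only [mem_insert, mem_singleton]; tauto

end Aux

/-- The packing encoding a subgraph isomorphism φ (I-cycles for φ together with
F-cycles matching the remaining W₃-vertices bijectively to [n_G - n_H]) is a
packing of pairwise vertex-disjoint cycles covering exactly all vertices except z,
and it is rejection-proof for both agents. -/
theorem stmt17 {nH nG : ℕ} (hn : nH ≤ nG)
    (G : SimpleGraph (Fin nG)) (H : SimpleGraph (Fin nH))
    (φ : Fin nH → Fin nG) (hφinj : Function.Injective φ)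
    (hφhom : ∀ u v : Fin nH, H.Adj u v → G.Adj (φ u) (φ v))
    (ψ : Fin (nG - nH) → Fin nG) (hψinj : Function.Injective ψ)
    (hψφ : ∀ i u, ψ i ≠ φ u)
    (C : Finset (Finset (Vtx nH nG)))
    (hC : C = Finset.image
        (fun u => ({Vtx.w1 u, Vtx.w2 u, Vtx.w3 (φ u)} : Finset (Vtx nH nG)))
        Finset.univ ∪
      Finset.image
        (fun i => ({Vtx.w3 (ψ i), Vtx.w4 i, Vtx.w5 i} : Finset (Vtx nH nG)))
        Finset.univ) :
    (∀ D ∈ C, IsCyc (Edg G H) D) ∧ PairwiseDisj C ∧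
    (∀ v : Vtx nH nG, v ∈ C.biUnion id ↔ v ≠ Vtx.z) ∧
    ¬ RejAny (Edg G H) own1 C ∧ ¬ RejAny (Edg G H) own2 C := by
  have hC' : C = Finset.image (fun u => Icyc φ u) Finset.univ ∪
      Finset.image (fun i => Fcyc (nH := nH) ψ i) Finset.univ := hC
  have hIC : ∀ u, Icyc φ u ∈ C := by
    intro u; rw [hC']
    exact Finset.mem_union_left _ (Finset.mem_image_of_mem _ (Finset.mem_univ u))
  have hFC : ∀ i, Fcyc (nH := nH) ψ i ∈ C := by
    intro i; rw [hC']
    exact Finset.mem_union_right _ (Finset.mem_image_of_mem _ (Finset.mem_univ i))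
  have hCchar : ∀ D ∈ C, (∃ u, D = Icyc φ u) ∨ (∃ i, D = Fcyc (nH := nH) ψ i) := by
    intro D hD
    rw [hC'] at hD
    rcases Finset.mem_union.mp hD with h | h
    · left; obtain ⟨u, -, hu⟩ := Finset.mem_image.mp h; exact ⟨u, hu.symm⟩
    · right; obtain ⟨i, -, hi⟩ := Finset.mem_image.mp h; exact ⟨i, hi.symm⟩
  have hsurj : ∀ x : Fin nG, (∃ u, φ u = x) ∨ (∃ i, ψ i = x) := by
    intro x
    have hdisj : Disjoint (Finset.univ.image φ) (Finset.univ.image ψ) := by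
      rw [Finset.disjoint_left]
      intro a ha hb
      obtain ⟨u, -, hu⟩ := Finset.mem_image.mp ha
      obtain ⟨i, -, hi⟩ := Finset.mem_image.mp hb
      exact hψφ i u (hi.trans hu.symm)
    have hcard : (Finset.univ.image φ ∪ Finset.univ.image ψ).card = nG := by
      rw [Finset.card_union_of_disjoint hdisj,
        Finset.card_image_of_injective _ hφinj,
        Finset.card_image_of_injective _ hψinj]
      simp
      omega
    have huniv : Finset.univ.image φ ∪ Finset.univ.image ψ = Finset.univ :=
      Finset.eq_univ_of_card _ (by simpa using hcard)
    have hx : x ∈ Finset.univ.image φ ∪ Finset.univ.image ψ := huniv ▸ Finset.mem_univ x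
    rcases Finset.mem_union.mp hx with h | h
    · left; obtain ⟨u, -, hu⟩ := Finset.mem_image.mp h; exact ⟨u, hu⟩
    · right; obtain ⟨i, -, hi⟩ := Finset.mem_image.mp h; exact ⟨i, hi⟩
  -- Part 1
  have part1 : ∀ D ∈ C, IsCyc (Edg G H) D := by
    intro D hD
    rcases hCchar D hD with ⟨u, rfl⟩ | ⟨i, rfl⟩
    · exact Or.inr ⟨Vtx.w1 u, Vtx.w2 u, Vtx.w3 (φ u), by simp, by simp, by simp, rfl,
        rfl, trivial, trivial⟩
    · exact Or.inr ⟨Vtx.w3 (ψ i), Vtx.w4 i, Vtx.w5 i, by simp, by simp, by simp, rfl,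
        trivial, rfl, trivial⟩
  -- Part 2
  have part2 : PairwiseDisj C := by
    unfold PairwiseDisj
    intro D1 h1 D2 h2 hne
    refine Finset.disjoint_left.mpr ?_
    intro v hv1 hv2
    rcases hCchar D1 (Finset.mem_coe.mp h1) with ⟨u, rfl⟩ | ⟨i, rfl⟩ <;>
      rcases hCchar D2 (Finset.mem_coe.mp h2) with ⟨u', rfl⟩ | ⟨i', rfl⟩ <;>
      simp only [Icyc, Fcyc, id_eq, mem_insert, mem_singleton] at hv1 hv2
    · have huu : u ≠ u' := fun h => hne (by rw [h])
      rcases hv1 with rfl | rfl | rfl <;> simp at hv2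
      · exact huu hv2
      · exact huu hv2
      · exact huu (hφinj hv2)
    · rcases hv1 with rfl | rfl | rfl <;> simp at hv2
      exact hψφ i' u hv2.symm
    · rcases hv1 with rfl | rfl | rfl <;> simp at hv2
      exact hψφ i u' hv2
    · have hii : i ≠ i' := fun h => hne (by rw [h])
      rcases hv1 with rfl | rfl | rfl <;> simp at hv2
      · exact hii (hψinj hv2)
      · exact hii hv2
      · exact hii hv2
  -- Part 3
  have part3 : ∀ v : Vtx nH nG, v ∈ C.biUnion id ↔ v ≠ Vtx.z := by
    intro v
    simp only [Finset.mem_biUnion, id_eq]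
    constructor
    · rintro ⟨D, hD, hvD⟩ rfl
      rcases hCchar D hD with ⟨u, rfl⟩ | ⟨i, rfl⟩ <;> simp [Icyc, Fcyc] at hvD
    · intro hv
      cases v with
      | w1 u => exact ⟨_, hIC u, by simp [Icyc]⟩
      | w2 u => exact ⟨_, hIC u, by simp [Icyc]⟩
      | w3 x =>
        rcases hsurj x with ⟨u, rfl⟩ | ⟨i, rfl⟩
        · exact ⟨_, hIC u, by simp [Icyc]⟩
        · exact ⟨_, hFC i, by simp [Fcyc]⟩
      | w4 i => exact ⟨_, hFC i, by simp [Fcyc]⟩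
      | w5 i => exact ⟨_, hFC i, by simp [Fcyc]⟩
      | z => exact absurd rfl hv
  -- Part 4: agent 1 does not reject
  have part4 : ¬ RejAny (Edg G H) own1 C := by
    rintro ⟨Crej, hsub, Cint, hint, hdisj, hlt⟩
    set U := (C \ Crej) ∪ Cint with hUdef
    have hdisj' : ∀ D1, D1 ∈ U → ∀ D2, D2 ∈ U → D1 ≠ D2 →
        ∀ v, v ∈ D1 → v ∈ D2 → False := by
      intro D1 h1 D2 h2 hne v hv1 hv2
      exact Finset.disjoint_left.mp
        (hdisj (Finset.mem_coe.mpr h1) (Finset.mem_coe.mpr h2) hne) hv1 hv2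
    -- everything owned by agent 1 is covered by U
    have hcovC : Finset.filter (fun v : Vtx nH nG => own1 v = true) (C.biUnion id) =
        (Finset.univ.filter (fun v : Vtx nH nG => own1 v = true)).erase Vtx.z := by
      ext v
      simp only [Finset.mem_filter, Finset.mem_erase, Finset.mem_univ, true_and, part3]
    have hzF : Vtx.z ∈ Finset.univ.filter (fun v : Vtx nH nG => own1 v = true) := by
      exact Finset.mem_filter.mpr ⟨Finset.mem_univ _, rfl⟩
    have hcard1 : covB own1 C =
        (Finset.univ.filter (fun v : Vtx nH nG => own1 v = true)).card - 1 := by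
      unfold covB
      rw [hcovC, Finset.card_erase_of_mem hzF]
    have hkey : Finset.filter (fun v : Vtx nH nG => own1 v = true) (U.biUnion id) =
        Finset.univ.filter (fun v : Vtx nH nG => own1 v = true) := by
      apply Finset.eq_of_subset_of_card_le (Finset.filter_subset_filter _ (Finset.subset_univ _))
      have hpos : 0 < (Finset.univ.filter (fun v : Vtx nH nG => own1 v = true)).card :=
        Finset.card_pos.mpr ⟨Vtx.z, hzF⟩
      rw [hcard1] at hlt
      unfold covB at hlt
      omega
    have hall : ∀ v : Vtx nH nG, own1 v = true → ∃ D ∈ U, v ∈ D := by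
      intro v hv
      have hv' : v ∈ Finset.univ.filter (fun v : Vtx nH nG => own1 v = true) := by
        simp [hv]
      rw [← hkey] at hv'
      obtain ⟨D, hD, hvD⟩ := Finset.mem_biUnion.mp (Finset.mem_filter.mp hv').1
      exact ⟨D, hD, hvD⟩
    -- no cycle of C contains z
    have hzNotC : ∀ D ∈ C, Vtx.z ∉ D := by
      intro D hD
      rcases hCchar D hD with ⟨u, rfl⟩ | ⟨i, rfl⟩ <;> simp [Icyc, Fcyc]
    -- the unique cycle through z
    obtain ⟨Dz, hDzU, hzDz⟩ := hall Vtx.z rfl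
    have hDzint : Dz ∈ Cint := by
      rcases Finset.mem_union.mp hDzU with h | h
      · exact absurd hzDz (hzNotC Dz (Finset.mem_sdiff.mp h).1)
      · exact h
    have hDzcyc := (hint Dz hDzint).1
    have hDzown := (hint Dz hDzint).2
    have huniq : ∀ D, D ∈ U → Vtx.z ∈ D → D = Dz := by
      intro D hD hzD
      by_contra hne
      exact hdisj' D hD Dz hDzU hne Vtx.z hzD hzDz
    -- all F-cycles remain
    have hFstay : ∀ i, Fcyc (nH := nH) ψ i ∈ U := by
      intro i
      obtain ⟨D, hDU, hw5⟩ := hall (Vtx.w5 i) rfl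
      have hDC : D ∈ C \ Crej := by
        rcases Finset.mem_union.mp hDU with h | h
        · exact h
        · exfalso
          have h4 := (hint D h).2 _ (lw5 (hint D h).1 hw5)
          simp [own1] at h4
      have hDF : D = Fcyc (nH := nH) ψ i := by
        rcases hCchar D (Finset.mem_sdiff.mp hDC).1 with ⟨u, rfl⟩ | ⟨j, rfl⟩
        · simp [Icyc] at hw5
        · have hij : i = j := by simpa [Fcyc] using hw5
          rw [hij]
      exact hDF ▸ hDU
    -- if an I-cycle was removed, its w3-vertex lies on the z-cycle
    have hSmem : ∀ u : Fin nH, Icyc φ u ∉ U → Vtx.w3 (φ u) ∈ Dz := by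
      intro u hu
      obtain ⟨D, hDU, hw3⟩ := hall (Vtx.w3 (φ u)) rfl
      have hDint : D ∈ Cint := by
        rcases Finset.mem_union.mp hDU with h | h
        · exfalso
          rcases hCchar D (Finset.mem_sdiff.mp h).1 with ⟨v, rfl⟩ | ⟨i, rfl⟩
          · have hveq : φ u = φ v := by simpa [Icyc] using hw3
            exact hu (by rw [hφinj hveq]; exact Finset.mem_union_left _ h)
          · have : φ u = ψ i := by simpa [Fcyc] using hw3
            exact hψφ i u this.symm
        · exact h
      have hzD : Vtx.z ∈ D := int_w3 (hint D hDint).1 (hint D hDint).2 hw3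
      exact (huniq D hDU hzD) ▸ hw3
    -- every w3-vertex on the z-cycle comes from a removed I-cycle
    have hw3NotU : ∀ x : Fin nG, Vtx.w3 x ∈ Dz → ∃ u, φ u = x ∧ Icyc φ u ∉ U := by
      intro x hx
      rcases hsurj x with ⟨u, rfl⟩ | ⟨i, rfl⟩
      · refine ⟨u, rfl, ?_⟩
        intro hIU
        have hne : Icyc φ u ≠ Dz := fun h => hzNotC _ (hIC u) (h ▸ hzDz)
        exact hdisj' _ hIU Dz hDzU hne (Vtx.w3 (φ u)) (by simp [Icyc]) hx
      · exfalso
        have hne : Fcyc (nH := nH) ψ i ≠ Dz := fun h => hzNotC _ (hFC i) (h ▸ hzDz)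
        exact hdisj' _ (hFstay i) Dz hDzU hne (Vtx.w3 (ψ i)) (by simp [Fcyc]) hx
    -- the z-cycle structure
    have hzchar := zcyc hDzcyc hzDz
    -- there is a removed I-cycle
    have hex : ∃ u, Icyc φ u ∉ U := by
      rcases hzchar with ⟨x, hDze⟩ | ⟨x, y, -, hDze⟩
      · obtain ⟨u, -, hu⟩ := hw3NotU x (by rw [hDze]; simp)
        exact ⟨u, hu⟩
      · obtain ⟨u, -, hu⟩ := hw3NotU x (by rw [hDze]; simp)
        exact ⟨u, hu⟩
    obtain ⟨u0, hu0⟩ := hex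
    -- the cycle covering w1 u0 is an internal all-W1 cycle of removed indices
    obtain ⟨D0, hD0U, hw1D0⟩ := hall (Vtx.w1 u0) rfl
    have hD0int : D0 ∈ Cint := by
      rcases Finset.mem_union.mp hD0U with h | h
      · exfalso
        rcases hCchar D0 (Finset.mem_sdiff.mp h).1 with ⟨v, rfl⟩ | ⟨i, rfl⟩
        · have hv : u0 = v := by simpa [Icyc] using hw1D0
          exact hu0 (by rw [hv]; exact Finset.mem_union_left _ h)
        · simp [Fcyc] at hw1D0
      · exact h
    have hD0cyc := (hint D0 hD0int).1
    have hD0own := (hint D0 hD0int).2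
    have hD0w1 := int_w1 hD0cyc hD0own hw1D0
    have hD0rem : ∀ v : Fin nH, Vtx.w1 v ∈ D0 → Icyc φ v ∉ U := by
      intro v hv hIvU
      have hne : Icyc φ v ≠ D0 := by
        intro h
        obtain ⟨w, hw⟩ := hD0w1 (Vtx.w2 v) (h ▸ (by simp [Icyc] : Vtx.w2 v ∈ Icyc φ v))
        simp at hw
      exact hdisj' _ hIvU D0 hD0U hne (Vtx.w1 v) (by simp [Icyc]) hv
    -- extract an H-edge inside D0
    have hpair : ∃ p q : Fin nH, p ≠ q ∧ H.Adj p q ∧ Vtx.w1 p ∈ D0 ∧ Vtx.w1 q ∈ D0 := by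
      rcases hD0cyc with ⟨a, b, hab, hDe, e1, e2⟩ | ⟨a, b, c, hab, hac, hbc, hDe, e1, e2, e3⟩
      · obtain ⟨p, hp⟩ := hD0w1 a (by rw [hDe]; simp)
        obtain ⟨q, hq⟩ := hD0w1 b (by rw [hDe]; simp)
        subst hp; subst hq
        exact ⟨p, q, fun h => hab (by rw [h]), e1, by rw [hDe]; simp, by rw [hDe]; simp⟩
      · obtain ⟨p, hp⟩ := hD0w1 a (by rw [hDe]; simp)
        obtain ⟨q, hq⟩ := hD0w1 b (by rw [hDe]; simp)
        subst hp; subst hq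
        exact ⟨p, q, fun h => hab (by rw [h]), e1, by rw [hDe]; simp, by rw [hDe]; simp⟩
    obtain ⟨p, q, hpq, hadj, hpD0, hqD0⟩ := hpair
    have hGadj : G.Adj (φ p) (φ q) := hφhom p q hadj
    have hp3 : Vtx.w3 (φ p) ∈ Dz := hSmem p (hD0rem p hpD0)
    have hq3 : Vtx.w3 (φ q) ∈ Dz := hSmem q (hD0rem q hqD0)
    rcases hzchar with ⟨x, hDze⟩ | ⟨x, y, hnadj, hDze⟩
    · rw [hDze] at hp3 hq3
      simp at hp3 hq3
      exact hpq (hφinj (hp3.trans hq3.symm))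
    · rw [hDze] at hp3 hq3
      simp at hp3 hq3
      rcases hp3 with hp3 | hp3 <;> rcases hq3 with hq3 | hq3
      · exact hpq (hφinj (hp3.trans hq3.symm))
      · exact hnadj (hp3 ▸ hq3 ▸ hGadj)
      · exact hnadj (G.adj_symm (hp3 ▸ hq3 ▸ hGadj))
      · exact hpq (hφinj (hp3.trans hq3.symm))
  -- Part 5: agent 2 does not reject
  have part5 : ¬ RejAny (Edg G H) own2 C := by
    rintro ⟨Crej, hsub, Cint, hint, hdisj, hlt⟩
    have h1 : covB own2 C = (Finset.univ.filter (fun v : Vtx nH nG => own2 v = true)).card := by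
      unfold covB
      congr 1
      ext v
      simp only [Finset.mem_filter, Finset.mem_univ, true_and, part3]
      constructor
      · rintro ⟨-, h⟩; exact h
      · intro h
        refine ⟨?_, h⟩
        rintro rfl
        simp [own2, own1] at h
    have h2 : covB own2 ((C \ Crej) ∪ Cint) ≤
        (Finset.univ.filter (fun v : Vtx nH nG => own2 v = true)).card := by
      unfold covB
      exact Finset.card_le_card (Finset.filter_subset_filter _ (Finset.subset_univ _))
    omega
  exact ⟨part1, part2, part3, part4, part5⟩
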